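/- Let Γ be a subgroup of SL(2,ℝ) acting on the upper half-plane ℍ by Möbius transformations. Suppose there is a compact subset K of ℍ such that ℍ = ⋃_{γ ∈ Γ} γ·K, and suppose the set S = { γ ∈ Γ : γ·K ∩ K ≠ ∅ } is finite and generates Γ. Let l : Γ → ℕ be the word length with respect to S. Then there exist a real number c > 0 and N_0 ∈ ℕ such that for all natural numbers N ≥ N_0, the number of elements γ ∈ Γ with l(γ) ≤ N is at least e^{cN}. -/

import Mathlib

/-!
By Baire's theorem some translate of `K`, hence `K` itself, has an interior point `z₀`. A ball
around `z₀` lies in `K`, so only finitely many `γ` (elements of `S`) move `z₀` less than its radius,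
and then, `ℍ` being proper, only finitely many move it by at most any given amount. As the orbit of
`z₀` is `R`-dense, elements whose orbit points lie near two points at distance `≤ 1` differ by one
of these finitely many elements, so word length grows by at most a constant `C` per unit step.

The points `k e^t + i`, `k < 2^m`, are reached from `i` in `2(m + t) + 1` unit steps: up the
imaginary axis to height `e^(m+t)`, across, and down again. For `t > 2R` these points are more
than `2R` apart, so the orbit points near them come from distinct group elements. This gives
`2^m` elements of word length at most `A + 2Cm`.
-/

/-- The word length of `γ` with respect to a generating set `S`: the least `N` such that
`γ` is the product of a list of `N` elements of `S` (and `0` if no such `N` exists). -/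
noncomputable def wordLength {G : Type*} [Group G] (S : Set G) (γ : G) : ℕ :=
  sInf {N : ℕ | ∃ l : List G, (∀ s ∈ l, s ∈ S) ∧ l.length = N ∧ l.prod = γ}

open Set Metric Real
open scoped Pointwise

section WordLength

variable {G : Type*} [Group G] {S : Set G}

theorem exists_list_prod_eq_of_closure_eq_top (hsymm : ∀ s ∈ S, s⁻¹ ∈ S)
    (hgen : Subgroup.closure S = ⊤) (g : G) : ∃ l : List G, (∀ s ∈ l, s ∈ S) ∧ l.prod = g := by
  have hg : g ∈ (Subgroup.closure S).toSubmonoid := by rw [hgen]; trivial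
  rw [Subgroup.closure_toSubmonoid, union_eq_left.2 fun s hs => by simpa using hsymm _ hs] at hg
  exact Submonoid.exists_list_of_mem_closure hg

theorem exists_list_length_eq_wordLength (hsymm : ∀ s ∈ S, s⁻¹ ∈ S)
    (hgen : Subgroup.closure S = ⊤) (g : G) :
    ∃ l : List G, (∀ s ∈ l, s ∈ S) ∧ l.length = wordLength S g ∧ l.prod = g := by
  obtain ⟨l, hlS, hl⟩ := exists_list_prod_eq_of_closure_eq_top hsymm hgen g
  exact Nat.sInf_mem (s := {N | ∃ l : List G, (∀ s ∈ l, s ∈ S) ∧ l.length = N ∧ l.prod = g})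
    ⟨l.length, l, hlS, rfl, hl⟩

theorem wordLength_prod_le_length {l : List G} (hl : ∀ s ∈ l, s ∈ S) :
    wordLength S l.prod ≤ l.length :=
  Nat.sInf_le ⟨l, hl, rfl, rfl⟩

theorem wordLength_mul_le (hsymm : ∀ s ∈ S, s⁻¹ ∈ S) (hgen : Subgroup.closure S = ⊤) (a b : G) :
    wordLength S (a * b) ≤ wordLength S a + wordLength S b := by
  obtain ⟨l₁, hl₁S, hl₁, rfl⟩ := exists_list_length_eq_wordLength hsymm hgen a
  obtain ⟨l₂, hl₂S, hl₂, rfl⟩ := exists_list_length_eq_wordLength hsymm hgen b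
  rw [← hl₁, ← hl₂, ← List.length_append, ← List.prod_append]
  exact wordLength_prod_le_length fun s hs => (List.mem_append.1 hs).elim (hl₁S s) (hl₂S s)

theorem finite_setOf_wordLength_le (hfin : S.Finite) (hsymm : ∀ s ∈ S, s⁻¹ ∈ S)
    (hgen : Subgroup.closure S = ⊤) (N : ℕ) : {g : G | wordLength S g ≤ N}.Finite := by
  have : Finite S := hfin.to_subtype
  refine ((List.finite_length_le S N).image fun l => (l.map (↑)).prod).subset fun g hg => ?_
  obtain ⟨l, hlS, hl, rfl⟩ := exists_list_length_eq_wordLength hsymm hgen g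
  lift l to List S using hlS
  exact ⟨l, by simpa using hl.trans_le hg, rfl⟩

end WordLength

theorem countable_of_finite_setOf_le {α : Type*} (f : α → ℕ) (hf : ∀ N, {a | f a ≤ N}.Finite) :
    Countable α := by
  rw [← countable_univ_iff,
    ← (iUnion_eq_univ_iff (f := fun N => {a | f a ≤ N})).2 fun a => ⟨f a, mem_ofPred.2 le_rfl⟩]
  exact countable_iUnion fun N => (hf N).countable

instance Subgroup.isIsometricSMul {G X : Type*} [Group G] [PseudoEMetricSpace X] [MulAction G X]
    [IsIsometricSMul G X] (H : Subgroup G) : IsIsometricSMul H X :=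
  ⟨fun h => isometry_smul X (h : G)⟩

section IsometricAction

variable {G X : Type*} [Group G] [MulAction G X]

theorem inv_smul_mem_of_smul_mem {K : Set X} {g : G} (hg : ∃ k ∈ K, g • k ∈ K) :
    ∃ k ∈ K, g⁻¹ • k ∈ K := by
  obtain ⟨k, hk, hgk⟩ := hg
  exact ⟨g • k, hgk, by rwa [inv_smul_smul]⟩

theorem nonempty_interior_of_iUnion_smul_eq_univ [Countable G] [TopologicalSpace X] [Nonempty X]
    [BaireSpace X] [ContinuousConstSMul G X] {K : Set X} (hK : IsClosed K)
    (hcover : ⋃ g : G, g • K = univ) :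
    (interior K).Nonempty := by
  obtain ⟨g, hg⟩ := nonempty_interior_of_iUnion_of_closed (fun g : G => hK.smul g) hcover
  rwa [interior_smul, smul_set_nonempty] at hg

variable [PseudoMetricSpace X] [IsIsometricSMul G X]

theorem dist_inv_mul_smul (a b : G) (z : X) : dist ((a⁻¹ * b) • z) z = dist (b • z) (a • z) := by
  rw [mul_smul, ← dist_smul a, smul_inv_smul]

theorem finite_setOf_smul_mem_ball {z : X} {ε : ℝ} (hfin : {g : G | dist (g • z) z < ε}.Finite)
    (c : X) : {g : G | g • z ∈ ball c (ε / 2)}.Finite := by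
  rcases Set.eq_empty_or_nonempty {g : G | g • z ∈ ball c (ε / 2)} with h | ⟨a, ha⟩
  · exact h ▸ finite_empty
  refine (hfin.image (a * ·)).subset fun g hg => ⟨a⁻¹ * g, ?_, mul_inv_cancel_left a g⟩
  show dist ((a⁻¹ * g) • z) z < ε
  rw [dist_inv_mul_smul]
  linarith [dist_triangle_right (g • z) (a • z) c, mem_ball.1 ha, mem_ball.1 hg]

theorem finite_setOf_dist_smul_le [ProperSpace X] {z : X} {ε : ℝ} (hε : 0 < ε)
    (hfin : {g : G | dist (g • z) z < ε}.Finite) (D : ℝ) :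
    {g : G | dist (g • z) z ≤ D}.Finite := by
  obtain ⟨t, -, ht, hcover⟩ :=
    finite_cover_balls_of_compact (isCompact_closedBall z D) (half_pos hε)
  refine (ht.biUnion fun c _ => finite_setOf_smul_mem_ball hfin c).subset fun g hg => ?_
  simpa using hcover (mem_closedBall.2 hg)

variable {f : G → ℕ} {z₀ : X} {R δ : ℝ} {C : ℕ}

theorem le_add_of_dist_le (hf : ∀ a b, f (a * b) ≤ f a + f b)
    (hC : ∀ g, dist (g • z₀) z₀ ≤ 2 * R + δ → f g ≤ C) {x y : X} (hxy : dist x y ≤ δ) {g g' : G}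
    (hg' : dist (g' • z₀) x ≤ R) (hg : dist (g • z₀) y ≤ R) : f g ≤ f g' + C := by
  have hclose : dist ((g'⁻¹ * g) • z₀) z₀ ≤ 2 * R + δ := by
    rw [dist_inv_mul_smul]
    linarith [dist_triangle4 (g • z₀) y x (g' • z₀), dist_comm x (g' • z₀), dist_comm x y]
  calc f g = f (g' * (g'⁻¹ * g)) := by rw [mul_inv_cancel_left]
    _ ≤ f g' + C := (hf _ _).trans (Nat.add_le_add_left (hC _ hclose) _)

theorem le_add_mul_of_chain (hf : ∀ a b, f (a * b) ≤ f a + f b)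
    (hC : ∀ g, dist (g • z₀) z₀ ≤ 2 * R + δ → f g ≤ C) (hdense : ∀ x, ∃ g : G, dist (g • z₀) x ≤ R)
    {p : ℕ → X} {n : ℕ} (hp : ∀ i ≤ n, dist (p i) (p (i + 1)) ≤ δ) {g g' : G}
    (hg' : dist (g' • z₀) (p 0) ≤ R) (hg : dist (g • z₀) (p (n + 1)) ≤ R) :
    f g ≤ f g' + C * (n + 1) := by
  induction n generalizing g with
  | zero => simpa using le_add_of_dist_le hf hC (hp 0 le_rfl) hg' hg
  | succ n ih =>
    obtain ⟨g'', hg''⟩ := hdense (p (n + 1))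
    have h_first := ih (fun i hi => hp i (by omega)) hg''
    have h_last := le_add_of_dist_le hf hC (hp (n + 1) le_rfl) hg'' hg
    linarith

end IsometricAction

theorem exists_exp_mul_le_of_two_pow_le {a : ℕ → ℝ} (ha : Monotone a) (A B : ℕ)
    (h : ∀ m : ℕ, (2 : ℝ) ^ m ≤ a (A + B * m)) :
    ∃ (c : ℝ) (N₀ : ℕ), 0 < c ∧ ∀ N : ℕ, N₀ ≤ N → exp (c * N) ≤ a N := by
  refine ⟨log 2 / (2 * (B + 1)), 2 * (A + B + 1), by positivity, fun N hN => ?_⟩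
  obtain ⟨m, r, hr, hNA⟩ : ∃ m r, r < B + 1 ∧ N - A = (B + 1) * m + r :=
    ⟨_, _, Nat.mod_lt _ B.succ_pos, (Nat.div_add_mod _ _).symm⟩
  rw [add_one_mul] at hNA
  have hAm : A + B * m ≤ N := by omega
  have hNm : (N : ℝ) ≤ 2 * (B + 1) * m := by
    rw [mul_assoc, add_one_mul]
    exact_mod_cast (by omega : N ≤ 2 * (B * m + m))
  calc exp (log 2 / (2 * (B + 1)) * N) ≤ exp (m * log 2) := by
        refine exp_le_exp.2 ?_
        rw [div_mul_eq_mul_div, div_le_iff₀ (by positivity)]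
        nlinarith [log_pos one_lt_two]
    _ = 2 ^ m := by rw [exp_nat_mul, exp_log two_pos]
    _ ≤ a N := (h m).trans (ha hAm)

namespace UpperHalfPlane

noncomputable def mkExp (x y : ℝ) : ℍ := mk ⟨x, exp y⟩ (exp_pos y)

theorem im_mkExp (x y : ℝ) : (mkExp x y).im = exp y := rfl

theorem dist_mkExp_vertical (x y y' : ℝ) : dist (mkExp x y) (mkExp x y') = |y - y'| :=
  ((isometry_vertical_line x).dist_eq y y').trans (Real.dist_eq y y')

theorem dist_coe_mkExp (x x' y : ℝ) : dist (mkExp x y : ℂ) (mkExp x' y) = |x - x'| :=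
  (Complex.dist_of_im_eq (z := mkExp x y) (w := mkExp x' y) rfl).trans (Real.dist_eq x x')

theorem dist_mkExp_horizontal_le {x x' y : ℝ} (h : |x - x'| ≤ exp y) :
    dist (mkExp x y) (mkExp x' y) ≤ 1 := by
  refine (dist_le_dist_coe_div_sqrt _ _).trans ?_
  rw [dist_coe_mkExp, im_mkExp, im_mkExp, sqrt_mul_self (exp_pos y).le]
  exact div_le_one_of_le₀ h (exp_pos y).le

theorem log_one_add_abs_sub_le_dist_mkExp (x x' : ℝ) :
    log (1 + |x - x'|) ≤ dist (mkExp x 0) (mkExp x' 0) := by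
  have h := dist_coe_le (mkExp x 0) (mkExp x' 0)
  rw [dist_coe_mkExp, im_mkExp, exp_zero, one_mul] at h
  exact (log_le_iff_le_exp (by positivity)).2 (by linarith)

section Growth

variable {G : Type*} [Group G] [MulAction G ℍ] [IsIsometricSMul G ℍ] {f : G → ℕ} {z₀ : ℍ}
  {R : ℝ} {C : ℕ}

theorem le_add_mul_of_dist_smul_mkExp_le (hf : ∀ a b, f (a * b) ≤ f a + f b)
    (hC : ∀ g, dist (g • z₀) z₀ ≤ 2 * R + 1 → f g ≤ C) (hdense : ∀ x, ∃ g : G, dist (g • z₀) x ≤ R)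
    {x : ℝ} {n : ℕ} (hx : |x| ≤ exp n) {g g' : G} (hg' : dist (g' • z₀) (mkExp 0 0) ≤ R)
    (hg : dist (g • z₀) (mkExp x 0) ≤ R) : f g ≤ f g' + C * (2 * n + 1) := by
  set p : ℕ → ℍ := fun i => if i ≤ n then mkExp 0 i else mkExp x (2 * n + 1 - i : ℕ)
  have hp0 : p 0 = mkExp 0 0 := by simp [p]
  have hp_last : p (2 * n + 1) = mkExp x 0 := by
    simp only [p]
    rw [if_neg (by omega), Nat.sub_self, Nat.cast_zero]
  refine le_add_mul_of_chain hf hC hdense (n := 2 * n) (p := p) (fun i hi => ?_) (hp0 ▸ hg')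
    (hp_last ▸ hg)
  simp only [p]
  rcases lt_trichotomy i n with h | rfl | h
  · rw [if_pos h.le, if_pos (Nat.succ_le_of_lt h), dist_mkExp_vertical]
    simp
  · rw [if_pos le_rfl, if_neg (by omega), show 2 * i + 1 - (i + 1) = i by omega]
    exact dist_mkExp_horizontal_le (by simpa using hx)
  · rw [if_neg (by omega), if_neg (by omega),
      show 2 * n + 1 - i = 2 * n + 1 - (i + 1) + 1 by omega, dist_mkExp_vertical]
    simp

theorem two_pow_le_ncard_setOf_le (hf : ∀ a b, f (a * b) ≤ f a + f b)
    (hball : ∀ N, {g : G | f g ≤ N}.Finite) (hdense : ∀ x, ∃ g : G, dist (g • z₀) x ≤ R)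
    (hC : ∀ g, dist (g • z₀) z₀ ≤ 2 * R + 1 → f g ≤ C) {g₀ : G}
    (hg₀ : dist (g₀ • z₀) (mkExp 0 0) ≤ R) {t : ℕ} (ht : 2 * R < t) (m : ℕ) :
    (2 : ℝ) ^ m ≤ {g : G | f g ≤ f g₀ + C * (2 * (m + t) + 1)}.ncard := by
  classical
  choose γ hγ using fun k : ℕ => hdense (mkExp (k * exp t) 0)
  have hγ_inj : γ.Injective := by
    intro k k' hkk'
    by_contra hne
    have hkk'_sep : 1 ≤ |(k : ℝ) - k'| := by
      exact_mod_cast Int.one_le_abs (sub_ne_zero.2 (Nat.cast_injective.ne hne))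
    have hclose : dist (mkExp (k * exp t) 0) (mkExp (k' * exp t) 0) ≤ 2 * R := by
      linarith [dist_triangle_left (mkExp (k * exp t) 0) (mkExp (k' * exp t) 0) (γ k • z₀), hγ k,
        hkk' ▸ hγ k']
    have hfar : (t : ℝ) ≤ log (1 + |k * exp t - k' * exp t|) := by
      rw [← sub_mul, abs_mul, abs_of_pos (exp_pos t), le_log_iff_exp_le (by positivity)]
      nlinarith [exp_pos t]
    linarith [log_one_add_abs_sub_le_dist_mkExp (k * exp t) (k' * exp t)]
  have hsub : ((Finset.range (2 ^ m)).image γ : Set G) ⊆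
      {g : G | f g ≤ f g₀ + C * (2 * (m + t) + 1)} := by
    intro g hg
    obtain ⟨k, hk, rfl⟩ := Finset.mem_image.1 hg
    refine le_add_mul_of_dist_smul_mkExp_le hf hC hdense ?_ hg₀ (hγ k)
    have hk_le : (k : ℝ) ≤ exp m :=
      calc (k : ℝ) ≤ 2 ^ m := by exact_mod_cast (Finset.mem_range.1 hk).le
        _ ≤ exp 1 ^ m := by gcongr; linarith [add_one_le_exp (1 : ℝ)]
        _ = exp m := exp_one_pow m
    rw [abs_of_nonneg (by positivity), Nat.cast_add, exp_add]
    gcongr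
  calc (2 : ℝ) ^ m = ((Finset.range (2 ^ m)).image γ : Set G).ncard := by
        rw [ncard_coe_finset, Finset.card_image_of_injective _ hγ_inj, Finset.card_range]
        push_cast; rfl
    _ ≤ _ := by exact_mod_cast ncard_le_ncard hsub (hball _)

theorem exists_exp_mul_le_ncard_setOf_le (hf : ∀ a b, f (a * b) ≤ f a + f b)
    (hball : ∀ N, {g : G | f g ≤ N}.Finite) (hdense : ∀ x, ∃ g : G, dist (g • z₀) x ≤ R)
    (hD : {g : G | dist (g • z₀) z₀ ≤ 2 * R + 1}.Finite) :
    ∃ (c : ℝ) (N₀ : ℕ), 0 < c ∧ ∀ N : ℕ, N₀ ≤ N →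
      exp (c * N) ≤ ({g : G | f g ≤ N}.ncard : ℝ) := by
  obtain ⟨C, hC⟩ := (hD.image f).bddAbove
  obtain ⟨g₀, hg₀⟩ := hdense (mkExp 0 0)
  obtain ⟨t, ht⟩ := exists_nat_gt (2 * R)
  refine exists_exp_mul_le_of_two_pow_le (fun M N hMN => ?_) (f g₀ + C * (2 * t + 1)) (2 * C)
    fun m => ?_
  · exact_mod_cast ncard_le_ncard (fun g (hg : f g ≤ M) => hg.trans hMN) (hball N)
  · convert two_pow_le_ncard_setOf_le hf hball hdense (fun g hg => hC ⟨g, hg, rfl⟩) hg₀ ht m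
      using 6
    ring

end Growth

end UpperHalfPlane

theorem exponential_growth_of_cocompact_lattice
    (Γ : Subgroup (Matrix.SpecialLinearGroup (Fin 2) ℝ))
    (K : Set UpperHalfPlane) (hK : IsCompact K)
    (hcover : ∀ x : UpperHalfPlane, ∃ γ : Γ, ∃ k ∈ K,
      (γ : Matrix.SpecialLinearGroup (Fin 2) ℝ) • k = x)
    (S : Set Γ)
    (hS : S = {γ : Γ | ∃ k ∈ K, (γ : Matrix.SpecialLinearGroup (Fin 2) ℝ) • k ∈ K})
    (hfin : S.Finite) (hgen : Subgroup.closure S = ⊤) :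
    ∃ (c : ℝ) (N₀ : ℕ), 0 < c ∧ ∀ N : ℕ, N₀ ≤ N →
      Real.exp (c * N) ≤ ({γ : Γ | wordLength S γ ≤ N}.ncard : ℝ) := by
  have hsymm : ∀ s ∈ S, s⁻¹ ∈ S := by
    subst hS
    exact fun s => inv_smul_mem_of_smul_mem
  have hball := finite_setOf_wordLength_le hfin hsymm hgen
  have : Countable Γ := countable_of_finite_setOf_le _ hball
  obtain ⟨z₀, hz₀⟩ := nonempty_interior_of_iUnion_smul_eq_univ (G := Γ) hK.isClosed
    (iUnion_eq_univ_iff.2 fun x => (hcover x).imp fun γ h => mem_smul_set.2 h)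
  obtain ⟨ε, hε, hεK⟩ := Metric.mem_nhds_iff.1 (mem_interior_iff_mem_nhds.1 hz₀)
  have hU : {γ : Γ | dist (γ • z₀) z₀ < ε}.Finite :=
    hfin.subset fun γ hγ => hS ▸ ⟨z₀, interior_subset hz₀, hεK hγ⟩
  obtain ⟨R, hR⟩ := hK.isBounded.subset_closedBall z₀
  refine UpperHalfPlane.exists_exp_mul_le_ncard_setOf_le (R := R) (wordLength_mul_le hsymm hgen)
    hball (fun x => ?_) (finite_setOf_dist_smul_le hε hU _)
  obtain ⟨γ, k, hk, rfl⟩ := hcover x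
  exact ⟨γ, (dist_smul (γ : Matrix.SpecialLinearGroup (Fin 2) ℝ) z₀ k).trans_le
    (dist_comm z₀ k ▸ hR hk)⟩
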